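/- For every w ∈ H^2_{0,•}(0,T), the coercivity estimate (∂_t² w, ∂_t L_T w)_{L²(0,T)} + |∂_t w(0)|² ≥ (1/(2eT)) ‖∂_t w‖²_{L²(0,T)} holds. -/

import Mathlib

open Real Set

/-!
Since `d/dt (½ ρ w'²) = ρ w' w'' + ½ ρ' w'²` for the weight `ρ(t) = e^{-t/T}`, the pairing
`(w'', ρ w')` equals the boundary terms `½ (ρ(T) w'(T)² - w'(0)²)` plus `(1/(2T)) ∫ ρ w'²`.
The boundary term at `T` is nonnegative, `w'(0)²` absorbs the one at `0`,
and `ρ ≥ e⁻¹` on `[0, T]`.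
-/

theorem integral_deriv_mul_weight_mul {a b : ℝ} {u u' ρ ρ' : ℝ → ℝ}
    (hu : ∀ t ∈ uIcc a b, HasDerivAt u (u' t) t)
    (hρ : ∀ t ∈ uIcc a b, HasDerivAt ρ (ρ' t) t)
    (hu' : ContinuousOn u' (uIcc a b)) (hρ' : ContinuousOn ρ' (uIcc a b)) :
    ∫ t in a..b, u' t * (ρ t * u t)
      = (ρ b * u b ^ 2 - ρ a * u a ^ 2) / 2 - (∫ t in a..b, ρ' t * u t ^ 2) / 2 := by
  have hu_cont : ContinuousOn u (uIcc a b) := fun t ht =>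
    (hu t ht).continuousAt.continuousWithinAt
  have hρ_cont : ContinuousOn ρ (uIcc a b) := fun t ht =>
    (hρ t ht).continuousAt.continuousWithinAt
  have hint₁ : IntervalIntegrable (fun t => u' t * (ρ t * u t)) MeasureTheory.volume a b :=
    (hu'.mul (hρ_cont.mul hu_cont)).intervalIntegrable
  have hint₂ : IntervalIntegrable (fun t => ρ' t * u t ^ 2) MeasureTheory.volume a b :=
    (hρ'.mul (hu_cont.pow 2)).intervalIntegrable
  have hFTC : ∫ t in a..b, (u' t * (ρ t * u t) + ρ' t * u t ^ 2 / 2)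
      = ρ b * u b ^ 2 / 2 - ρ a * u a ^ 2 / 2 := by
    refine intervalIntegral.integral_eq_sub_of_hasDerivAt (f := fun t => ρ t * u t ^ 2 / 2)
      (fun t ht => ?_)
      (hint₁.add (hint₂.div_const 2))
    refine (((hρ t ht).fun_mul ((hu t ht).fun_pow 2)).div_const 2).congr_deriv ?_
    push_cast
    ring
  rw [intervalIntegral.integral_add hint₁ (hint₂.div_const 2), intervalIntegral.integral_div]
    at hFTC
  linarith

theorem mul_integral_sq_le_integral_weight_mul_sq {a b m : ℝ} {ρ u : ℝ → ℝ} (hab : a ≤ b)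
    (hρ : ContinuousOn ρ (Icc a b)) (hu : ContinuousOn u (Icc a b))
    (hm : ∀ t ∈ Icc a b, m ≤ ρ t) :
    m * ∫ t in a..b, u t ^ 2 ≤ ∫ t in a..b, ρ t * u t ^ 2 := by
  rw [← intervalIntegral.integral_const_mul]
  exact intervalIntegral.integral_mono_on hab
    (((hu.pow 2).const_smul m).intervalIntegrable_of_Icc hab)
    ((hρ.mul (hu.pow 2)).intervalIntegrable_of_Icc hab)
    fun t ht => mul_le_mul_of_nonneg_right (hm t ht) (sq_nonneg _)

theorem hasDerivAt_exp_neg_div (T t : ℝ) :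
    HasDerivAt (fun s => exp (-(s / T))) (-(exp (-(t / T)) / T)) t := by
  convert ((hasDerivAt_id' t).div_const T).fun_neg.exp using 1
  ring

theorem stmt_12_general (T : ℝ) (hT : 0 < T)
    (w' w'' : ℝ → ℝ)
    (hw' : ∀ t ∈ Icc (0:ℝ) T, HasDerivAt w' (w'' t) t)
    (hw''c : ContinuousOn w'' (Icc (0:ℝ) T)) :
    (∫ t in (0:ℝ)..T, w'' t * (Real.exp (-(t/T)) * w' t)) + (w' 0)^2
      ≥ 1 / (2 * Real.exp 1 * T) * ∫ t in (0:ℝ)..T, (w' t)^2 := by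
  have hI : uIcc 0 T = Icc 0 T := uIcc_of_le hT.le
  have hw'c : ContinuousOn w' (Icc 0 T) := fun t ht => (hw' t ht).continuousAt.continuousWithinAt
  have hweight : ContinuousOn (fun t => exp (-(t / T)) / T) (Icc 0 T) := by fun_prop
  have hidentity := integral_deriv_mul_weight_mul (hI ▸ hw')
    (fun t _ => hasDerivAt_exp_neg_div T t) (hI ▸ hw''c) (hI ▸ hweight.neg)
  simp only [neg_mul, intervalIntegral.integral_neg, div_self hT.ne', zero_div, neg_zero, exp_zero,
    one_mul] at hidentity
  have hbound := mul_integral_sq_le_integral_weight_mul_sq (m := exp (-1) / T) hT.le hweight hw'c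
    fun t ht => div_le_div_of_nonneg_right
      (exp_le_exp.2 (neg_le_neg ((div_le_one hT).2 ht.2))) hT.le
  have hconst : 1 / (2 * exp 1 * T) = exp (-1) / T / 2 := by rw [exp_neg]; field_simp
  have hT_term : 0 ≤ exp (-1) * w' T ^ 2 := by positivity
  rw [hidentity, hconst]
  linarith [sq_nonneg (w' 0)]

/-- Coercivity estimate: for every `w ∈ H²_{0,•}(0,T)`,
`(w'', ∂_t L_T w)_{L²} + |w'(0)|² ≥ (1/(2eT)) ‖w'‖²_{L²}`, with `∂_t L_T w(t) = e^{-t/T} w'(t)`. -/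
theorem stmt_12 (T : ℝ) (hT : 0 < T)
    (w w' w'' : ℝ → ℝ)
    (hw : ∀ t ∈ Icc (0:ℝ) T, HasDerivAt w (w' t) t)
    (hw' : ∀ t ∈ Icc (0:ℝ) T, HasDerivAt w' (w'' t) t)
    (hw''c : ContinuousOn w'' (Icc (0:ℝ) T))
    (hw0 : w 0 = 0) :
    (∫ t in (0:ℝ)..T, w'' t * (Real.exp (-(t/T)) * w' t)) + (w' 0)^2
      ≥ 1 / (2 * Real.exp 1 * T) * ∫ t in (0:ℝ)..T, (w' t)^2 :=
  stmt_12_general T hT w' w'' hw' hw''c
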